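/- For every finite simple bipartite graph G=(V,E) with positive edge weights w, the core of the assignment game (the matching game on (G,w)) is non-empty. -/
import Mathlib


open scoped Classical
open Finset

namespace MatchingGames

variable {V : Type*}

/-- `M` is a matching of the graph `G`: a set of edges of `G` that are pairwise
vertex-disjoint. -/
def IsMatching (G : SimpleGraph V) (M : Finset (Sym2 V)) : Prop :=
  (∀ e ∈ M, e ∈ G.edgeSet) ∧
    ∀ e ∈ M, ∀ f ∈ M, e ≠ f → ∀ v : V, v ∈ e → v ∉ f

/-- every endpoint of every edge of `M` belongs to the coalition `S`, i.e. `M` is a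
set of edges of the induced subgraph `G[S]`. -/
def EdgesIn (S : Finset V) (M : Finset (Sym2 V)) : Prop :=
  ∀ e ∈ M, ∀ v : V, v ∈ e → v ∈ S

/-- the weight `w(M)` of a set of edges `M`. -/
noncomputable def mWeight (w : Sym2 V → ℝ) (M : Finset (Sym2 V)) : ℝ :=
  ∑ e ∈ M, w e

/-- the value `v(S)` of a coalition `S` in the matching game on `(G,w)`:
the maximum weight of a matching of the induced subgraph `G[S]`. -/
noncomputable def matchVal (G : SimpleGraph V) (w : Sym2 V → ℝ) (S : Finset V) : ℝ :=
  sSup {t | ∃ M : Finset (Sym2 V), IsMatching G M ∧ EdgesIn S M ∧ t = mWeight w M}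

/-- `x` is a core allocation of the cooperative game with value function `v`:
`x(N) = v(N)` and `x(S) ≥ v(S)` for every coalition `S`. -/
def InCore [Fintype V] (v : Finset V → ℝ) (x : V → ℝ) : Prop :=
  (∑ i, x i) = v Finset.univ ∧ ∀ S : Finset V, v S ≤ ∑ i ∈ S, x i

def Feas (G : SimpleGraph V) (w : Sym2 V → ℝ) (y : V → ℝ) : Prop :=
  (∀ v, 0 ≤ y v) ∧ ∀ a b : V, G.Adj a b → w s(a, b) ≤ y a + y b

lemma exists_opt [Fintype V] (G : SimpleGraph V) (w : Sym2 V → ℝ) :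
    ∃ y : V → ℝ, Feas G w y ∧ ∀ z, Feas G w z → ∑ v, y v ≤ ∑ v, z v := by
  set C : ℝ := ∑ e ∈ G.edgeFinset, |w e| with hC
  have hC0 : 0 ≤ C := Finset.sum_nonneg fun e _ => abs_nonneg _
  set C2 : ℝ := (Fintype.card V : ℝ) * C + C with hC2
  have hCC2 : C ≤ C2 := by
    have : 0 ≤ (Fintype.card V : ℝ) * C := mul_nonneg (Nat.cast_nonneg _) hC0
    linarith
  set K : Set (V → ℝ) :=
    {y | (∀ v, 0 ≤ y v ∧ y v ≤ C2) ∧ ∀ a b : V, G.Adj a b → w s(a, b) ≤ y a + y b} with hK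
  have hwle : ∀ a b : V, G.Adj a b → w s(a, b) ≤ C := by
    intro a b hab
    have hmem : s(a, b) ∈ G.edgeFinset := by
      rw [SimpleGraph.mem_edgeFinset, SimpleGraph.mem_edgeSet]; exact hab
    calc w s(a, b) ≤ |w s(a, b)| := le_abs_self _
      _ ≤ C := Finset.single_le_sum (fun e _ => abs_nonneg (w e)) hmem
  have hy0K : (fun _ : V => C) ∈ K := by
    refine ⟨fun v => ⟨hC0, hCC2⟩, fun a b hab => ?_⟩
    have := hwle a b hab
    linarith
  have hKcl : IsClosed K := by
    have h1 : K = (⋂ v, ({y : V → ℝ | 0 ≤ y v} ∩ {y | y v ≤ C2})) ∩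
        ⋂ a, ⋂ b, {y : V → ℝ | G.Adj a b → w s(a, b) ≤ y a + y b} := by
      ext y
      simp only [hK, Set.mem_setOf_eq, Set.mem_inter_iff, Set.mem_iInter,
        Set.mem_setOf_eq]
    rw [h1]
    refine IsClosed.inter (isClosed_iInter fun v => IsClosed.inter ?_ ?_)
      (isClosed_iInter fun a => isClosed_iInter fun b => ?_)
    · exact isClosed_le continuous_const (continuous_apply v)
    · exact isClosed_le (continuous_apply v) continuous_const
    · by_cases h : G.Adj a b
      · simp only [h, true_implies]
        exact isClosed_le continuous_const ((continuous_apply a).add (continuous_apply b))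
      · simp only [h, false_implies, Set.setOf_true]
        exact isClosed_univ
  have hKcomp : IsCompact K := by
    refine IsCompact.of_isClosed_subset (isCompact_univ_pi fun _ : V => isCompact_Icc (a := (0:ℝ)) (b := C2)) hKcl ?_
    intro y hy
    exact Set.mem_univ_pi.mpr fun v => Set.mem_Icc.mpr ⟨(hy.1 v).1, (hy.1 v).2⟩
  obtain ⟨y, hyK, hymin⟩ := hKcomp.exists_isMinOn ⟨_, hy0K⟩
    ((continuous_finset_sum Finset.univ fun v _ => continuous_apply v).continuousOn
      (s := K) :
      ContinuousOn (fun y : V → ℝ => ∑ v, y v) K)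
  refine ⟨y, ⟨fun v => (hyK.1 v).1, hyK.2⟩, ?_⟩
  intro z hz
  by_cases hzb : ∀ v, z v ≤ C2
  · exact hymin ⟨fun v => ⟨hz.1 v, hzb v⟩, hz.2⟩
  · push_neg at hzb
    obtain ⟨v, hv⟩ := hzb
    have h1 : ∑ u, y u ≤ ∑ u, (fun _ : V => C) u := hymin hy0K
    have h2 : ∑ u, (fun _ : V => C) u = (Fintype.card V : ℝ) * C := by
      simp [Finset.sum_const, Finset.card_univ, nsmul_eq_mul]
    have h3 : z v ≤ ∑ u, z u :=
      Finset.single_le_sum (fun u _ => hz.1 u) (Finset.mem_univ v)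
    have : (Fintype.card V : ℝ) * C ≤ C2 := by linarith
    linarith


/-- weak duality inner lemma -/
lemma mWeight_le_sum (G : SimpleGraph V) (w : Sym2 V → ℝ) (y : V → ℝ)
    (hy0 : ∀ v, 0 ≤ y v)
    (hyf : ∀ a b : V, G.Adj a b → w s(a, b) ≤ y a + y b) :
    ∀ (M : Finset (Sym2 V)), IsMatching G M → ∀ S : Finset V, EdgesIn S M →
      mWeight w M ≤ ∑ i ∈ S, y i := by
  intro M
  induction M using Finset.induction with
  | empty =>
    intro _ S _
    simpa [mWeight] using Finset.sum_nonneg fun i _ => hy0 i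
  | @insert e M' heM' ih =>
    intro hM S hE
    obtain ⟨⟨a, b⟩, rfl⟩ := Quot.exists_rep e
    have he : s(a, b) ∈ G.edgeSet := hM.1 _ (Finset.mem_insert_self _ _)
    have hadj : G.Adj a b := G.mem_edgeSet.mp he
    have hab : a ≠ b := hadj.ne
    have haS : a ∈ S := hE _ (Finset.mem_insert_self _ _) a (Sym2.mem_mk_left a b)
    have hbS : b ∈ S := hE _ (Finset.mem_insert_self _ _) b (Sym2.mem_mk_right a b)
    have hM' : IsMatching G M' := by
      refine ⟨fun e' he' => hM.1 _ (Finset.mem_insert_of_mem he'), ?_⟩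
      intro e' he' f' hf' hne v hv
      exact hM.2 e' (Finset.mem_insert_of_mem he') f' (Finset.mem_insert_of_mem hf') hne v hv
    have hE' : EdgesIn ((S.erase a).erase b) M' := by
      intro e' he' v hv
      have hvS : v ∈ S := hE e' (Finset.mem_insert_of_mem he') v hv
      have hne : s(a, b) ≠ e' := fun h => heM' (show s(a, b) ∈ M' by rw [h]; exact he')
      have hdisj := hM.2 _ (Finset.mem_insert_self _ _) e' (Finset.mem_insert_of_mem he') hne
      have hva : v ≠ a := fun h => hdisj a (Sym2.mem_mk_left a b) (h ▸ hv)
      have hvb : v ≠ b := fun h => hdisj b (Sym2.mem_mk_right a b) (h ▸ hv)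
      exact Finset.mem_erase.mpr ⟨hvb, Finset.mem_erase.mpr ⟨hva, hvS⟩⟩
    have hbe : b ∈ S.erase a := Finset.mem_erase.mpr ⟨hab.symm, hbS⟩
    have hsum : ∑ i ∈ S, y i
        = ∑ i ∈ (S.erase a).erase b, y i + y b + y a := by
      rw [Finset.sum_erase_add _ _ hbe, Finset.sum_erase_add _ _ haS]
    have : mWeight w (insert s(a, b) M') = w s(a, b) + mWeight w M' := by
      simp [mWeight, Finset.sum_insert heM']
    rw [this, hsum]
    have h1 := ih hM' _ hE'
    have h2 := hyf a b hadj
    linarith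

lemma zero_mem_matchSet (G : SimpleGraph V) (w : Sym2 V → ℝ) (S : Finset V) :
    (0 : ℝ) ∈ {t | ∃ M : Finset (Sym2 V), IsMatching G M ∧ EdgesIn S M ∧ t = mWeight w M} := by
  refine ⟨∅, ⟨by simp, by simp⟩, by intro e he; simp at he, by simp [mWeight]⟩

lemma matchVal_le (G : SimpleGraph V) (w : Sym2 V → ℝ) (y : V → ℝ)
    (hy0 : ∀ v, 0 ≤ y v)
    (hyf : ∀ a b : V, G.Adj a b → w s(a, b) ≤ y a + y b) (S : Finset V) :
    matchVal G w S ≤ ∑ i ∈ S, y i := by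
  refine csSup_le ⟨0, zero_mem_matchSet G w S⟩ ?_
  rintro t ⟨M, hM, hE, rfl⟩
  exact mWeight_le_sum G w y hy0 hyf M hM S hE

lemma le_matchVal [Fintype V] (G : SimpleGraph V) (w : Sym2 V → ℝ) (S : Finset V)
    (M : Finset (Sym2 V)) (hM : IsMatching G M) (hE : EdgesIn S M) :
    mWeight w M ≤ matchVal G w S := by
  apply le_csSup
  · refine (Set.finite_range (mWeight w)).bddAbove.mono ?_
    rintro t ⟨M', _, _, rfl⟩
    exact ⟨M', rfl⟩
  · exact ⟨M, hM, hE, rfl⟩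


/-- Key combinatorial lemma: from an injective "tight neighbor" assignment on `S`
in a bipartite relation, extract a pairing (matching) covering `S`. -/
lemma exists_pairing (H : V → V → Prop) (A : Set V)
    (hH : ∀ v u, H v u → (v ∈ A ↔ u ∉ A)) (g : V → V) :
    ∀ S : Finset V, (∀ v ∈ S, H v (g v)) → Set.InjOn g ↑S →
    ∃ P : Finset (V × V),
      (∀ p ∈ P, H p.1 p.2) ∧
      (∀ p ∈ P, ∀ q ∈ P, p ≠ q →
        p.1 ≠ q.1 ∧ p.1 ≠ q.2 ∧ p.2 ≠ q.1 ∧ p.2 ≠ q.2) ∧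
      (∀ v ∈ S, ∃ p ∈ P, v = p.1 ∨ v = p.2) ∧
      (∀ p ∈ P, (p.1 ∈ S ∨ p.1 ∈ S.image g) ∧ (p.2 ∈ S ∨ p.2 ∈ S.image g)) := by
  intro S
  induction S using Finset.strongInduction with
  | _ S ih =>
    intro hSH hinj
    by_cases hcase : ∃ v₀ ∈ S, v₀ ∉ S.image g
    · obtain ⟨v₀, hv₀S, hv₀g⟩ := hcase
      set u₀ := g v₀ with hu₀
      set S' : Finset V := (S.erase v₀).erase u₀ with hS'
      have hS'sub : S' ⊆ S := (Finset.erase_subset _ _).trans (Finset.erase_subset _ _)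
      have hS'ss : S' ⊂ S := Finset.ssubset_iff_of_subset hS'sub |>.mpr
        ⟨v₀, hv₀S, fun h => (Finset.mem_erase.mp (Finset.mem_erase.mp h).2).1 rfl⟩
      obtain ⟨P', hP'H, hP'disj, hP'cov, hP'bd⟩ :=
        ih S' hS'ss (fun v hv => hSH v (hS'sub hv)) (hinj.mono (by exact_mod_cast hS'sub))
      -- key freshness facts
      have hv₀S' : v₀ ∉ S' := fun h => (Finset.mem_erase.mp (Finset.mem_erase.mp h).2).1 rfl
      have hu₀S' : u₀ ∉ S' := fun h => (Finset.mem_erase.mp h).1 rfl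
      have hv₀im : v₀ ∉ S'.image g := fun h => hv₀g (Finset.image_subset_image hS'sub h)
      have hu₀im : u₀ ∉ S'.image g := by
        intro h
        obtain ⟨x, hx, hgx⟩ := Finset.mem_image.mp h
        have : x = v₀ := hinj (hS'sub hx) hv₀S hgx
        exact hv₀S' (this ▸ hx)
      have hfreshv : ∀ x, (x ∈ S' ∨ x ∈ S'.image g) → v₀ ≠ x ∧ u₀ ≠ x := by
        rintro x (hx | hx)
        · exact ⟨fun h => hv₀S' (h ▸ hx), fun h => hu₀S' (h ▸ hx)⟩
        · exact ⟨fun h => hv₀im (h ▸ hx), fun h => hu₀im (h ▸ hx)⟩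
      refine ⟨insert (v₀, u₀) P', ?_, ?_, ?_, ?_⟩
      · rintro p hp
        rcases Finset.mem_insert.mp hp with rfl | hp
        · exact hSH v₀ hv₀S
        · exact hP'H p hp
      · rintro p hp q hq hpq
        rcases Finset.mem_insert.mp hp with rfl | hp <;>
          rcases Finset.mem_insert.mp hq with rfl | hq
        · exact absurd rfl hpq
        · obtain ⟨h1, h2⟩ := hP'bd q hq
          obtain ⟨ha1, hb1⟩ := hfreshv q.1 h1
          obtain ⟨ha2, hb2⟩ := hfreshv q.2 h2
          exact ⟨ha1, ha2, hb1, hb2⟩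
        · obtain ⟨h1, h2⟩ := hP'bd p hp
          obtain ⟨ha1, hb1⟩ := hfreshv p.1 h1
          obtain ⟨ha2, hb2⟩ := hfreshv p.2 h2
          exact ⟨ha1.symm, hb1.symm, ha2.symm, hb2.symm⟩
        · exact hP'disj p hp q hq hpq
      · intro v hv
        by_cases hv1 : v = v₀
        · exact ⟨(v₀, u₀), Finset.mem_insert_self _ _, Or.inl hv1⟩
        by_cases hv2 : v = u₀
        · exact ⟨(v₀, u₀), Finset.mem_insert_self _ _, Or.inr hv2⟩
        · have hvS' : v ∈ S' := Finset.mem_erase.mpr ⟨hv2, Finset.mem_erase.mpr ⟨hv1, hv⟩⟩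
          obtain ⟨p, hp, hvp⟩ := hP'cov v hvS'
          exact ⟨p, Finset.mem_insert_of_mem hp, hvp⟩
      · rintro p hp
        rcases Finset.mem_insert.mp hp with rfl | hp
        · exact ⟨Or.inl hv₀S, Or.inr (Finset.mem_image_of_mem g hv₀S)⟩
        · obtain ⟨h1, h2⟩ := hP'bd p hp
          constructor
          · rcases h1 with h | h
            · exact Or.inl (hS'sub h)
            · exact Or.inr (Finset.image_subset_image hS'sub h)
          · rcases h2 with h | h
            · exact Or.inl (hS'sub h)
            · exact Or.inr (Finset.image_subset_image hS'sub h)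
    · -- every element of S is in the image : g restricted to S is a "permutation"
      push_neg at hcase
      refine ⟨(S.filter (· ∈ A)).image (fun v => (v, g v)), ?_, ?_, ?_, ?_⟩
      · rintro p hp
        obtain ⟨v, hv, rfl⟩ := Finset.mem_image.mp hp
        exact hSH v (Finset.mem_filter.mp hv).1
      · rintro p hp q hq hpq
        obtain ⟨v, hv, rfl⟩ := Finset.mem_image.mp hp
        obtain ⟨u, hu, rfl⟩ := Finset.mem_image.mp hq
        have hvS : v ∈ S := (Finset.mem_filter.mp hv).1
        have huS : u ∈ S := (Finset.mem_filter.mp hu).1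
        have hvA : v ∈ A := by simpa using (Finset.mem_filter.mp hv).2
        have huA : u ∈ A := by simpa using (Finset.mem_filter.mp hu).2
        have hgvA : g v ∉ A := (hH v (g v) (hSH v hvS)).mp hvA
        have hguA : g u ∉ A := (hH u (g u) (hSH u huS)).mp huA
        have hvu : v ≠ u := fun h => hpq (by rw [h])
        exact ⟨hvu, fun h => hguA ((show v = g u from h) ▸ hvA), fun h => hgvA ((show u = g v from h.symm) ▸ huA),
          fun h => hvu (hinj hvS huS h)⟩
      · intro v hv
        by_cases hvA : v ∈ A
        · exact ⟨(v, g v), Finset.mem_image_of_mem _ (Finset.mem_filter.mpr ⟨hv, by simpa⟩),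
            Or.inl rfl⟩
        · obtain ⟨u, hu, hgu⟩ := Finset.mem_image.mp (hcase v hv)
          have huA : u ∈ A := by
            have := (hH u (g u) (hSH u hu))
            rw [hgu] at this
            exact this.mpr hvA
          exact ⟨(u, g u), Finset.mem_image_of_mem _ (Finset.mem_filter.mpr ⟨hu, by simpa⟩),
            Or.inr hgu.symm⟩
      · rintro p hp
        obtain ⟨v, hv, rfl⟩ := Finset.mem_image.mp hp
        have hvS : v ∈ S := (Finset.mem_filter.mp hv).1
        exact ⟨Or.inl hvS, Or.inr (Finset.mem_image_of_mem g hvS)⟩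


noncomputable def TightN [Fintype V] (G : SimpleGraph V) (w : Sym2 V → ℝ) (y : V → ℝ)
    (a : V) : Finset V :=
  Finset.univ.filter (fun b => G.Adj a b ∧ y a + y b ≤ w s(a, b))

lemma hall_condition [Fintype V] (G : SimpleGraph V) (w : Sym2 V → ℝ) (A : Set V)
    (hbip : ∀ i j : V, G.Adj i j → (i ∈ A ↔ j ∉ A))
    (y : V → ℝ) (hy : Feas G w y)
    (hopt : ∀ z, Feas G w z → ∑ v, y v ≤ ∑ v, z v)
    (X : Finset V) (hX : ∀ v ∈ X, 0 < y v ∧ v ∈ A) :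
    X.card ≤ (X.biUnion (TightN G w y)).card := by
  by_contra hcard
  push_neg at hcard
  set N : Finset V := X.biUnion (TightN G w y) with hN
  have hXne : X.Nonempty := Finset.card_pos.mp (lt_of_le_of_lt (Nat.zero_le _) hcard)
  set ε₁ : ℝ := X.inf' hXne y with hε₁
  have hε₁pos : 0 < ε₁ := (Finset.lt_inf'_iff hXne).mpr fun v hv => (hX v hv).1
  set D : Finset (V × V) :=
    (X ×ˢ Finset.univ).filter (fun p : V × V => G.Adj p.1 p.2 ∧ p.2 ∉ N) with hD
  set slack : V × V → ℝ := fun p => y p.1 + y p.2 - w s(p.1, p.2) with hslack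
  have hDpos : ∀ p ∈ D, 0 < slack p := by
    rintro ⟨a, b⟩ hp
    obtain ⟨hmem, hadj, hbN⟩ := Finset.mem_filter.mp hp
    have haX : a ∈ X := (Finset.mem_product.mp hmem).1
    by_contra hle
    push_neg at hle
    have : b ∈ TightN G w y a := by
      refine Finset.mem_filter.mpr ⟨Finset.mem_univ _, hadj, ?_⟩
      simp only [hslack] at hle
      linarith
    exact hbN (Finset.mem_biUnion.mpr ⟨a, haX, this⟩)
  set ε : ℝ := if hDne : D.Nonempty then min ε₁ (D.inf' hDne slack) else ε₁ with hε
  have hεpos : 0 < ε := by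
    rw [hε]
    split_ifs with hDne
    · exact lt_min hε₁pos ((Finset.lt_inf'_iff hDne).mpr fun p hp => hDpos p hp)
    · exact hε₁pos
  have hεy : ∀ v ∈ X, ε ≤ y v := by
    intro v hv
    have h1 : ε ≤ ε₁ := by
      rw [hε]; split_ifs with hDne
      · exact min_le_left _ _
      · exact le_refl _
    exact h1.trans (Finset.inf'_le _ hv)
  have hεs : ∀ p ∈ D, ε ≤ slack p := by
    intro p hp
    have hDne : D.Nonempty := ⟨p, hp⟩
    rw [hε]
    simp only [hDne, dif_pos]
    exact (min_le_right _ _).trans (Finset.inf'_le _ hp)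
  have hXN : ∀ v ∈ X, v ∉ N := by
    intro v hv hvN
    obtain ⟨a, haX, hvT⟩ := Finset.mem_biUnion.mp hvN
    have hadj : G.Adj a v := (Finset.mem_filter.mp hvT).2.1
    exact ((hbip a v hadj).mp (hX a haX).2) (hX v hv).2
  set z : V → ℝ := fun v => y v + (if v ∈ N then ε else 0) - (if v ∈ X then ε else 0)
    with hz
  have hzfeas : Feas G w z := by
    constructor
    · intro v
      by_cases hv : v ∈ X
      · have hvN : v ∉ N := hXN v hv
        simp only [hz, hv, hvN, if_pos, if_neg, not_false_iff]
        have := hεy v hv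
        linarith
      · simp only [hz, hv, if_neg, not_false_iff]
        have h0 : (0:ℝ) ≤ if v ∈ N then ε else 0 := by
          split_ifs
          · exact le_of_lt hεpos
          · exact le_refl _
        have := hy.1 v
        linarith
    · intro a b hadj
      have hnotboth : ¬(a ∈ X ∧ b ∈ X) := by
        rintro ⟨ha, hb⟩
        exact ((hbip a b hadj).mp (hX a ha).2) (hX b hb).2
      have hfeas := hy.2 a b hadj
      by_cases haX : a ∈ X
      · have haN : a ∉ N := hXN a haX
        have hbX : b ∉ X := fun hb => hnotboth ⟨haX, hb⟩
        by_cases hbN : b ∈ N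
        · simp only [hz, haX, haN, hbX, hbN, if_pos, if_neg, not_false_iff]
          linarith
        · have hpD : (a, b) ∈ D := Finset.mem_filter.mpr
            ⟨Finset.mem_product.mpr ⟨haX, Finset.mem_univ _⟩, hadj, hbN⟩
          have hs := hεs _ hpD
          simp only [hslack] at hs
          simp only [hz, haX, haN, hbX, hbN, if_pos, if_neg, not_false_iff]
          linarith
      · by_cases hbX : b ∈ X
        · have hbN : b ∉ N := hXN b hbX
          by_cases haN : a ∈ N
          · simp only [hz, haX, haN, hbX, hbN, if_pos, if_neg, not_false_iff]
            linarith
          · have hpD : (b, a) ∈ D := Finset.mem_filter.mpr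
              ⟨Finset.mem_product.mpr ⟨hbX, Finset.mem_univ _⟩, hadj.symm, haN⟩
            have hs := hεs _ hpD
            simp only [hslack] at hs
            have hsw : w s(b, a) = w s(a, b) := by rw [Sym2.eq_swap]
            rw [hsw] at hs
            simp only [hz, haX, haN, hbX, hbN, if_pos, if_neg, not_false_iff]
            linarith
        · have h0a : (0:ℝ) ≤ if a ∈ N then ε else 0 := by
            split_ifs
            · exact le_of_lt hεpos
            · exact le_refl _
          have h0b : (0:ℝ) ≤ if b ∈ N then ε else 0 := by
            split_ifs
            · exact le_of_lt hεpos
            · exact le_refl _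
          simp only [hz, haX, hbX, if_neg, not_false_iff]
          linarith
  have hsumz : ∑ v, z v = ∑ v, y v + (N.card : ℝ) * ε - (X.card : ℝ) * ε := by
    simp only [hz]
    rw [Finset.sum_sub_distrib, Finset.sum_add_distrib]
    congr 1
    · congr 1
      rw [Finset.sum_ite_mem, Finset.univ_inter, Finset.sum_const, nsmul_eq_mul]
    · rw [Finset.sum_ite_mem, Finset.univ_inter, Finset.sum_const, nsmul_eq_mul]
  have hlt : (N.card : ℝ) * ε < (X.card : ℝ) * ε :=
    mul_lt_mul_of_pos_right (Nat.cast_lt.mpr hcard) hεpos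
  have := hopt z hzfeas
  rw [hsumz] at this
  linarith


noncomputable def sideSet [Fintype V] (y : V → ℝ) (A : Set V) : Finset V :=
  Finset.univ.filter (fun v => 0 < y v ∧ v ∈ A)

lemma mem_sideSet [Fintype V] {y : V → ℝ} {A : Set V} {v : V} :
    v ∈ sideSet y A ↔ 0 < y v ∧ v ∈ A := by
  simp [sideSet]

/-- Hall's theorem application: a tight injective assignment on one side. -/
lemma exists_tight_inj [Fintype V] (G : SimpleGraph V) (w : Sym2 V → ℝ) (A : Set V)
    (hbip : ∀ i j : V, G.Adj i j → (i ∈ A ↔ j ∉ A))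
    (y : V → ℝ) (hy : Feas G w y)
    (hopt : ∀ z, Feas G w z → ∑ v, y v ≤ ∑ v, z v) :
    ∃ f : {v // v ∈ sideSet y A} → V,
      Function.Injective f ∧ ∀ x, f x ∈ TightN G w y x.val := by
  set t : {v // v ∈ sideSet y A} → Finset V := fun a => TightN G w y a.val with ht
  have hall : ∀ s : Finset {v // v ∈ sideSet y A}, s.card ≤ (s.biUnion t).card := by
    intro s
    set X := s.image Subtype.val with hX
    have hXcard : X.card = s.card := Finset.card_image_of_injective s Subtype.val_injective
    have hXP : ∀ v ∈ X, 0 < y v ∧ v ∈ A := by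
      intro v hv
      obtain ⟨⟨v', hv'⟩, _, rfl⟩ := Finset.mem_image.mp hv
      exact mem_sideSet.mp hv'
    have hcond := hall_condition G w A hbip y hy hopt X hXP
    have hbi : X.biUnion (TightN G w y) = s.biUnion t := by
      ext b
      simp only [Finset.mem_biUnion, Finset.mem_image, ht, hX]
      constructor
      · rintro ⟨a, ⟨a', ha', rfl⟩, hb⟩
        exact ⟨a', ha', hb⟩
      · rintro ⟨a', ha', hb⟩
        exact ⟨a'.val, ⟨a', ha', rfl⟩, hb⟩
    rw [hbi, hXcard] at hcond
    exact hcond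
  exact (Finset.all_card_le_biUnion_card_iff_exists_injective t).mp hall

/-- the core of an assignment game (a matching game on a bipartite graph)
is non-empty. -/
theorem statement1 [Fintype V] (G : SimpleGraph V) (w : Sym2 V → ℝ)
    (hw : ∀ e ∈ G.edgeSet, 0 < w e) (A : Set V)
    (hbip : ∀ i j : V, G.Adj i j → (i ∈ A ↔ j ∉ A)) :
    ∃ x : V → ℝ, InCore (matchVal G w) x := by
  obtain ⟨y, hyF, hopt⟩ := exists_opt G w
  have hub : ∀ S : Finset V, matchVal G w S ≤ ∑ i ∈ S, y i :=
    matchVal_le G w y hyF.1 hyF.2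
  -- the bipartition hypothesis for the complement side
  have hbip' : ∀ i j : V, G.Adj i j → (i ∈ Aᶜ ↔ j ∉ Aᶜ) := by
    intro i j hadj
    have := hbip i j hadj
    simp only [Set.mem_compl_iff]
    tauto
  obtain ⟨f₁, hf₁inj, hf₁⟩ := exists_tight_inj G w A hbip y hyF hopt
  obtain ⟨f₂, hf₂inj, hf₂⟩ := exists_tight_inj G w Aᶜ hbip' y hyF hopt
  set H : V → V → Prop := fun a b => G.Adj a b ∧ y a + y b ≤ w s(a, b) with hHdef
  set g : V → V := fun v =>
    if h : v ∈ sideSet y A then f₁ ⟨v, h⟩ else if h' : v ∈ sideSet y Aᶜ then f₂ ⟨v, h'⟩ else v with hg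
  set S := Finset.univ.filter (fun v => 0 < y v) with hS
  have hTight : ∀ a b, b ∈ TightN G w y a → H a b := by
    intro a b hb
    exact (Finset.mem_filter.mp hb).2
  have hgSA : ∀ v (h : v ∈ sideSet y A), g v = f₁ ⟨v, h⟩ := by
    intro v h; simp only [hg, dif_pos h]
  have hgSB : ∀ v (h : v ∈ sideSet y Aᶜ), g v = f₂ ⟨v, h⟩ := by
    intro v h
    have hvA : v ∉ sideSet y A := by
      intro hv
      exact (mem_sideSet.mp h).2 (mem_sideSet.mp hv).2
    simp only [hg, dif_neg hvA, dif_pos h]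
  have hf₁A : ∀ (x : {v // v ∈ sideSet y A}), f₁ x ∉ A := by
    intro x
    have := hTight _ _ (hf₁ x)
    exact (hbip _ _ this.1).mp (mem_sideSet.mp x.2).2
  have hf₂A : ∀ (x : {v // v ∈ sideSet y Aᶜ}), f₂ x ∈ A := by
    intro x
    have := hTight _ _ (hf₂ x)
    have h2 := (hbip' _ _ this.1).mp (mem_sideSet.mp x.2).2
    simpa using h2
  have hScases : ∀ v ∈ S, (v ∈ sideSet y A) ∨ (v ∈ sideSet y Aᶜ) := by
    intro v hv
    have hvy : 0 < y v := (Finset.mem_filter.mp hv).2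
    by_cases hvA : v ∈ A
    · exact Or.inl (mem_sideSet.mpr ⟨hvy, hvA⟩)
    · exact Or.inr (mem_sideSet.mpr ⟨hvy, hvA⟩)
  have hgH : ∀ v ∈ S, H v (g v) := by
    intro v hv
    rcases hScases v hv with h | h
    · rw [hgSA v h]; exact hTight _ _ (hf₁ _)
    · rw [hgSB v h]; exact hTight _ _ (hf₂ _)
  have hginj : Set.InjOn g ↑S := by
    intro u hu v hv huv
    have hu' : u ∈ S := hu
    have hv' : v ∈ S := hv
    rcases hScases u hu' with h1 | h1 <;> rcases hScases v hv' with h2 | h2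
    · rw [hgSA u h1, hgSA v h2] at huv
      exact congrArg Subtype.val (hf₁inj huv)
    · rw [hgSA u h1, hgSB v h2] at huv
      exact absurd (huv ▸ hf₂A ⟨v, h2⟩) (hf₁A ⟨u, h1⟩)
    · rw [hgSB u h1, hgSA v h2] at huv
      exact absurd (huv.symm ▸ hf₂A ⟨u, h1⟩) (hf₁A ⟨v, h2⟩)
    · rw [hgSB u h1, hgSB v h2] at huv
      exact congrArg Subtype.val (hf₂inj huv)
  have hHbip : ∀ v u, H v u → (v ∈ A ↔ u ∉ A) := fun v u h => hbip v u h.1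
  obtain ⟨P, hPH, hPdisj, hPcov, hPbd⟩ := exists_pairing H A hHbip g S hgH hginj
  have hp12 : ∀ p ∈ P, p.1 ≠ p.2 := by
    intro p hp h
    have := hHbip p.1 p.2 (hPH p hp)
    rw [h] at this
    exact (iff_not_self this)
  set M : Finset (Sym2 V) := P.image (fun p => s(p.1, p.2)) with hM
  have hMmatch : IsMatching G M := by
    constructor
    · intro e he
      obtain ⟨p, hp, rfl⟩ := Finset.mem_image.mp he
      exact (G.mem_edgeSet).mpr (hPH p hp).1
    · intro e he f hf hef v hve hvf
      obtain ⟨p, hp, rfl⟩ := Finset.mem_image.mp he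
      obtain ⟨q, hq, rfl⟩ := Finset.mem_image.mp hf
      have hpq : p ≠ q := by rintro rfl; exact hef rfl
      obtain ⟨d1, d2, d3, d4⟩ := hPdisj p hp q hq hpq
      rcases Sym2.mem_iff.mp hve with rfl | rfl <;>
        rcases Sym2.mem_iff.mp hvf with h | h
      · exact d1 h
      · exact d2 h
      · exact d3 h
      · exact d4 h
  have hsum0 : ∑ v, y v = ∑ v ∈ S, y v := by
    rw [hS]
    exact (Finset.sum_filter_of_ne fun v _ hne =>
      lt_of_le_of_ne (hyF.1 v) (Ne.symm hne)).symm
  set vertsP : Finset V := P.biUnion (fun p => {p.1, p.2}) with hvertsP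
  have hSsub : S ⊆ vertsP := by
    intro v hv
    obtain ⟨p, hp, hvp⟩ := hPcov v hv
    refine Finset.mem_biUnion.mpr ⟨p, hp, ?_⟩
    rcases hvp with rfl | rfl
    · exact Finset.mem_insert_self _ _
    · exact Finset.mem_insert_of_mem (Finset.mem_singleton_self _)
  have h1 : ∑ v ∈ S, y v ≤ ∑ v ∈ vertsP, y v :=
    Finset.sum_le_sum_of_subset_of_nonneg hSsub fun v _ _ => hyF.1 v
  have hdisjP : (↑P : Set (V × V)).PairwiseDisjoint
      (fun p : V × V => ({p.1, p.2} : Finset V)) := by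
    intro p hp q hq hne
    obtain ⟨d1, d2, d3, d4⟩ := hPdisj p (Finset.mem_coe.mp hp) q (Finset.mem_coe.mp hq) hne
    simp only [Finset.disjoint_left, Finset.mem_insert, Finset.mem_singleton]
    rintro v (rfl | rfl) (h | h)
    · exact d1 h
    · exact d2 h
    · exact d3 h
    · exact d4 h
  have h2 : ∑ v ∈ vertsP, y v = ∑ p ∈ P, (y p.1 + y p.2) := by
    rw [hvertsP, Finset.sum_biUnion hdisjP]
    exact Finset.sum_congr rfl fun p hp => Finset.sum_pair (hp12 p hp)
  have h3 : ∑ p ∈ P, (y p.1 + y p.2) ≤ ∑ p ∈ P, w s(p.1, p.2) :=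
    Finset.sum_le_sum fun p hp => (hPH p hp).2
  have h4 : ∑ p ∈ P, w s(p.1, p.2) = mWeight w M := by
    rw [hM, mWeight, Finset.sum_image]
    intro p hp q hq heq
    by_contra hpq
    obtain ⟨d1, d2, d3, d4⟩ := hPdisj p hp q hq hpq
    rcases Sym2.eq_iff.mp heq with ⟨h5, h6⟩ | ⟨h5, h6⟩
    · exact d1 h5
    · exact d2 h5
  have h5 : mWeight w M ≤ matchVal G w Finset.univ :=
    le_matchVal G w Finset.univ M hMmatch fun e _ v _ => Finset.mem_univ v
  have hlb : ∑ v, y v ≤ matchVal G w Finset.univ := by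
    rw [hsum0]
    calc ∑ v ∈ S, y v ≤ ∑ v ∈ vertsP, y v := h1
      _ = ∑ p ∈ P, (y p.1 + y p.2) := h2
      _ ≤ ∑ p ∈ P, w s(p.1, p.2) := h3
      _ = mWeight w M := h4
      _ ≤ matchVal G w Finset.univ := h5
  exact ⟨y, le_antisymm hlb (hub Finset.univ), hub⟩


end MatchingGames
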